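/- Any real-valued logic that satisfies P1 is an extension of Gödel logic: if L = Taut(T,*) for some continuous t-norm * and algebra of truth values T, and L satisfies P1, then Taut([0,1],min) ⊆ L. -/

import Mathlib

open Set

noncomputable section

/-- The real unit interval `[0,1]` as a subset of `ℝ`. -/
def I01 : Set ℝ := Set.Icc 0 1

/-- A continuous t-norm on `[0,1]`. -/
structure ContTNorm where
  mul : ℝ → ℝ → ℝ
  maps_to : ∀ x ∈ I01, ∀ y ∈ I01, mul x y ∈ I01
  continuousOn : ContinuousOn (fun p : ℝ × ℝ => mul p.1 p.2) (I01 ×ˢ I01)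
  assoc : ∀ x ∈ I01, ∀ y ∈ I01, ∀ z ∈ I01, mul (mul x y) z = mul x (mul y z)
  comm : ∀ x ∈ I01, ∀ y ∈ I01, mul x y = mul y x
  mono : ∀ a ∈ I01, ∀ b ∈ I01, ∀ c ∈ I01, b ≤ c → mul a b ≤ mul a c
  one_mul' : ∀ x ∈ I01, mul 1 x = x

/-- The residuum of a t-norm: `x →* y := sup { c ∈ [0,1] | x * c ≤ y }`. -/
def resid (t : ContTNorm) (x y : ℝ) : ℝ :=
  sSup {c | c ∈ I01 ∧ t.mul x c ≤ y}

/-- An algebra of truth values for the t-norm `t`: a subset of `[0,1]` containing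
`0` and `1` and closed under `t.mul` and its residuum. -/
structure TruthAlg (t : ContTNorm) where
  carrier : Set ℝ
  subset : carrier ⊆ I01
  zero_mem : (0:ℝ) ∈ carrier
  one_mem : (1:ℝ) ∈ carrier
  mul_mem : ∀ x ∈ carrier, ∀ y ∈ carrier, t.mul x y ∈ carrier
  resid_mem : ∀ x ∈ carrier, ∀ y ∈ carrier, resid t x y ∈ carrier

/-- Propositional formulas over countably many variables with `&`, `→`, `⊥`. -/
inductive Formula : Type
  | var : ℕ → Formula
  | bot : Formula
  | conj : Formula → Formula → Formula
  | impl : Formula → Formula → Formula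

/-- `α ↔ β := (α → β) & (β → α)`. -/
def Formula.iff (a b : Formula) : Formula := .conj (.impl a b) (.impl b a)

/-- The valuation determined by an assignment `v` of reals to the variables. -/
def eval (t : ContTNorm) (v : ℕ → ℝ) : Formula → ℝ
  | .var i => v i
  | .bot => 0
  | .conj a b => t.mul (eval t v a) (eval t v b)
  | .impl a b => resid t (eval t v a) (eval t v b)

/-- A valuation into `(T, t)` is (identified with) an assignment of values of `T`
to the propositional variables. -/
def IsValuation (t : ContTNorm) (T : TruthAlg t) (v : ℕ → ℝ) : Prop :=
  ∀ i, v i ∈ T.carrier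

/-- The logic induced by `(T, t)`: all formulas true to degree 1 under every valuation. -/
def Taut (t : ContTNorm) (T : TruthAlg t) : Set Formula :=
  {α | ∀ v : ℕ → ℝ, IsValuation t T v → eval t v α = 1}

/-- Principle P1. -/
def P1 (L : Set Formula) : Prop :=
  ∀ (t : ContTNorm) (T : TruthAlg t), Taut t T = L →
    ∀ α β : Formula,
      (Formula.iff α β ∈ L ↔
        ∀ v : ℕ → ℝ, IsValuation t T v → (eval t v α = 1 ↔ eval t v β = 1))

/-- Principle P2. -/
def P2 (L : Set Formula) : Prop :=
  ∀ (t : ContTNorm) (T : TruthAlg t), Taut t T = L →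
    ∀ v w : ℕ → ℝ, IsValuation t T v → IsValuation t T w → v ≠ w →
      ∃ α : Formula, 0 < eval t v α ∧ eval t w α = 0

/-- The Gödel t-norm: minimum. -/
def minT : ContTNorm where
  mul := fun x y => min x y
  maps_to := by
    rintro x ⟨hx0, hx1⟩ y ⟨hy0, hy1⟩
    exact ⟨le_min hx0 hy0, min_le_of_left_le hx1⟩
  continuousOn := (continuous_fst.min continuous_snd).continuousOn
  assoc := fun x _ y _ z _ => min_assoc x y z
  comm := fun x _ y _ => min_comm x y
  mono := fun a _ b _ c _ h => min_le_min le_rfl h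
  one_mul' := by rintro x ⟨hx0, hx1⟩; exact min_eq_right hx1

/-- The Łukasiewicz t-norm: `x ⊙ y = max 0 (x + y - 1)`. -/
def lukT : ContTNorm where
  mul := fun x y => max 0 (x + y - 1)
  maps_to := by
    rintro x ⟨hx0, hx1⟩ y ⟨hy0, hy1⟩
    exact ⟨le_max_left _ _, max_le zero_le_one (by linarith)⟩
  continuousOn :=
    (continuous_const.max ((continuous_fst.add continuous_snd).sub continuous_const)).continuousOn
  assoc := by
    rintro x ⟨hx0, hx1⟩ y ⟨hy0, hy1⟩ z ⟨hz0, hz1⟩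
    simp only [max_def]
    split_ifs <;> linarith
  comm := by intro x _ y _; rw [add_comm]
  mono := by
    rintro a _ b _ c _ h
    exact max_le_max le_rfl (by linarith)
  one_mul' := by
    rintro x ⟨hx0, hx1⟩
    rw [show (1:ℝ) + x - 1 = x by ring, max_eq_right hx0]

/-- The product t-norm: ordinary multiplication. -/
def prodT : ContTNorm where
  mul := fun x y => x * y
  maps_to := by
    rintro x ⟨hx0, hx1⟩ y ⟨hy0, hy1⟩
    exact ⟨mul_nonneg hx0 hy0, by nlinarith⟩
  continuousOn := (continuous_fst.mul continuous_snd).continuousOn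
  assoc := fun x _ y _ z _ => mul_assoc x y z
  comm := fun x _ y _ => mul_comm x y
  mono := by rintro a ⟨ha0, _⟩ b _ c _ h; exact mul_le_mul_of_nonneg_left h ha0
  one_mul' := fun x _ => one_mul x

lemma ContTNorm.mul_zero' (t : ContTNorm) {x : ℝ} (hx : x ∈ I01) : t.mul x 0 = 0 := by
  have h01 : (0:ℝ) ∈ I01 := ⟨le_rfl, zero_le_one⟩
  have h11 : (1:ℝ) ∈ I01 := ⟨zero_le_one, le_rfl⟩
  have h1 : t.mul x 0 = t.mul 0 x := t.comm x hx 0 h01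
  have h2 : t.mul 0 x ≤ t.mul 0 1 := t.mono 0 h01 x hx 1 h11 hx.2
  have h3 : t.mul 0 1 = t.mul 1 0 := t.comm 0 h01 1 h11
  have h4 : t.mul 1 0 = 0 := t.one_mul' 0 h01
  have h5 : t.mul x 0 ∈ I01 := t.maps_to x hx 0 h01
  rw [h3, h4] at h2
  rw [h1] at h5 ⊢
  exact le_antisymm h2 h5.1

lemma resid_mem_I01 (t : ContTNorm) {x y : ℝ} (hx : x ∈ I01) (hy : y ∈ I01) :
    resid t x y ∈ I01 := by
  have h01 : (0:ℝ) ∈ I01 := ⟨le_rfl, zero_le_one⟩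
  have h0 : (0:ℝ) ∈ {c | c ∈ I01 ∧ t.mul x c ≤ y} :=
    ⟨h01, by rw [t.mul_zero' hx]; exact hy.1⟩
  have hbdd : BddAbove {c | c ∈ I01 ∧ t.mul x c ≤ y} := ⟨1, fun c hc => hc.1.2⟩
  constructor
  · exact le_csSup hbdd h0
  · exact csSup_le ⟨0, h0⟩ fun c hc => hc.1.2

/-- The full algebra of truth values `[0,1]` for a t-norm `t`. -/
def fullAlg (t : ContTNorm) : TruthAlg t where
  carrier := I01
  subset := le_rfl
  zero_mem := ⟨le_rfl, zero_le_one⟩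
  one_mem := ⟨zero_le_one, le_rfl⟩
  mul_mem := t.maps_to
  resid_mem := fun _ hx _ hy => resid_mem_I01 t hx hy

lemma resid_eq_one_of_le (t : ContTNorm) {x y : ℝ} (hx : x ∈ I01) (hy : y ∈ I01)
    (hxy : x ≤ y) : resid t x y = 1 := by
  have h11 : (1:ℝ) ∈ I01 := ⟨zero_le_one, le_rfl⟩
  have hmul : t.mul x 1 = x := by rw [t.comm x hx 1 h11]; exact t.one_mul' x hx
  have h1 : (1:ℝ) ∈ {c | c ∈ I01 ∧ t.mul x c ≤ y} := ⟨h11, by rw [hmul]; exact hxy⟩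
  have hbdd : BddAbove {c | c ∈ I01 ∧ t.mul x c ≤ y} := ⟨1, fun c hc => hc.1.2⟩
  exact le_antisymm (csSup_le ⟨1, h1⟩ fun c hc => hc.1.2) (le_csSup hbdd h1)

lemma resid_one_zero (t : ContTNorm) : resid t 1 0 = 0 := by
  have : {c | c ∈ I01 ∧ t.mul 1 c ≤ 0} = {0} := by
    ext c
    constructor
    · rintro ⟨hc, hle⟩
      have := t.one_mul' c hc
      have := hc.1
      simp only [Set.mem_singleton_iff]
      linarith [this, (t.one_mul' c hc) ▸ hle]
    · rintro rfl
      exact ⟨⟨le_rfl, zero_le_one⟩, by rw [t.mul_zero' ⟨zero_le_one, le_rfl⟩]⟩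
  rw [resid, this, csSup_singleton]

/-- The two-element algebra of truth values `{0,1}`. -/
def boolAlg (t : ContTNorm) : TruthAlg t where
  carrier := {0, 1}
  subset := by
    rintro x (rfl | rfl)
    · exact ⟨le_rfl, zero_le_one⟩
    · exact ⟨zero_le_one, le_rfl⟩
  zero_mem := Or.inl rfl
  one_mem := Or.inr rfl
  mul_mem := by
    have h01 : (0:ℝ) ∈ I01 := ⟨le_rfl, zero_le_one⟩
    have h11 : (1:ℝ) ∈ I01 := ⟨zero_le_one, le_rfl⟩
    rintro x (rfl | rfl) y (rfl | rfl)
    · exact Or.inl (t.mul_zero' h01)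
    · exact Or.inl (by rw [t.comm 0 h01 1 h11]; exact t.mul_zero' h11)
    · exact Or.inl (t.mul_zero' h11)
    · exact Or.inr (t.one_mul' 1 h11)
  resid_mem := by
    have h01 : (0:ℝ) ∈ I01 := ⟨le_rfl, zero_le_one⟩
    have h11 : (1:ℝ) ∈ I01 := ⟨zero_le_one, le_rfl⟩
    rintro x (rfl | rfl) y (rfl | rfl)
    · exact Or.inr (resid_eq_one_of_le t h01 h01 le_rfl)
    · exact Or.inr (resid_eq_one_of_le t h01 h11 zero_le_one)
    · exact Or.inl (resid_one_zero t)
    · exact Or.inr (resid_eq_one_of_le t h11 h11 le_rfl)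

/-- Classical logic: the logic induced by the two-element algebra `{0,1}`
(this is independent of the chosen continuous t-norm). -/
def ClassicalLogic : Set Formula := Taut minT (boolAlg minT)

/-!
Under P1 the formulas `X₁ & X₁` and `X₁` are equivalent in `Taut t T`, since `x * x = 1` iff
`x = 1`. Evaluating that equivalence shows `a ≤ a * a`, so every truth value in `T` is
idempotent. By the intermediate value theorem an idempotent `a` satisfies `a * y = min a y` for
all `y`, hence also `a →* y` is the Gödel residuum. Thus on `T` every formula takes the same value
under `*` as under `min`, and every Gödel tautology belongs to `Taut t T`.
-/

lemma zero_mem_I01 : (0 : ℝ) ∈ I01 := ⟨le_rfl, zero_le_one⟩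

lemma one_mem_I01 : (1 : ℝ) ∈ I01 := ⟨zero_le_one, le_rfl⟩

namespace ContTNorm

variable (t : ContTNorm)

lemma mul_one' {x : ℝ} (hx : x ∈ I01) : t.mul x 1 = x := by
  rw [t.comm x hx 1 one_mem_I01, t.one_mul' x hx]

lemma mul_le_left {x y : ℝ} (hx : x ∈ I01) (hy : y ∈ I01) : t.mul x y ≤ x :=
  (t.mono x hx y hy 1 one_mem_I01 hy.2).trans_eq (t.mul_one' hx)

lemma eq_one_of_mul_eq_one {x y : ℝ} (hx : x ∈ I01) (hy : y ∈ I01) (h : t.mul x y = 1) :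
    x = 1 ∧ y = 1 := by
  have hx1 : 1 ≤ x := h ▸ t.mul_le_left hx hy
  have hy1 : 1 ≤ y := h ▸ t.comm x hx y hy ▸ t.mul_le_left hy hx
  exact ⟨le_antisymm hx.2 hx1, le_antisymm hy.2 hy1⟩

lemma continuousOn_mul_left {x : ℝ} (hx : x ∈ I01) : ContinuousOn (t.mul x) I01 :=
  t.continuousOn.comp (continuous_const.prodMk continuous_id).continuousOn fun _ hc => ⟨hx, hc⟩

lemma mul_eq_min_of_mul_self_eq {a y : ℝ} (ha : a ∈ I01) (haa : t.mul a a = a) (hy : y ∈ I01) :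
    t.mul a y = min a y := by
  rcases le_total y a with hya | hay
  · have hmem : y ∈ Icc (t.mul a 0) (t.mul a 1) := by
      rw [t.mul_zero' ha, t.mul_one' ha]
      exact ⟨hy.1, hya⟩
    obtain ⟨c, hc, rfl⟩ := intermediate_value_Icc zero_le_one (t.continuousOn_mul_left ha) hmem
    rw [min_eq_right hya, ← t.assoc a ha a ha c hc, haa]
  · rw [min_eq_left hay]
    exact le_antisymm (t.mul_le_left ha hy) (haa.symm.le.trans (t.mono a ha a ha y hy hay))

end ContTNorm

lemma mul_resid_le (t : ContTNorm) {x y : ℝ} (hx : x ∈ I01) (hy : y ∈ I01) :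
    t.mul x (resid t x y) ≤ y := by
  have hclosed : IsClosed {c | c ∈ I01 ∧ t.mul x c ≤ y} :=
    (t.continuousOn_mul_left hx).preimage_isClosed_of_isClosed isClosed_Icc isClosed_Iic
  have hzero : (0 : ℝ) ∈ {c | c ∈ I01 ∧ t.mul x c ≤ y} :=
    ⟨zero_mem_I01, (t.mul_zero' hx).trans_le hy.1⟩
  exact (hclosed.csSup_mem ⟨0, hzero⟩ ⟨1, fun _ hc => hc.1.2⟩).2

lemma le_of_resid_eq_one (t : ContTNorm) {x y : ℝ} (hx : x ∈ I01) (hy : y ∈ I01)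
    (h : resid t x y = 1) : x ≤ y := by
  simpa [h, t.mul_one' hx] using mul_resid_le t hx hy

lemma resid_eq_resid_minT {t : ContTNorm} {x : ℝ} (hmin : ∀ c ∈ I01, t.mul x c = min x c)
    (y : ℝ) : resid t x y = resid minT x y := by
  have hset : {c | c ∈ I01 ∧ t.mul x c ≤ y} = {c | c ∈ I01 ∧ min x c ≤ y} := by
    ext c
    exact and_congr_right fun hc => by rw [hmin c hc]
  exact congrArg sSup hset

lemma eval_mem (t : ContTNorm) (T : TruthAlg t) {v : ℕ → ℝ} (hv : IsValuation t T v) :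
    ∀ φ : Formula, eval t v φ ∈ T.carrier
  | .var i => hv i
  | .bot => T.zero_mem
  | .conj a b => T.mul_mem _ (eval_mem t T hv a) _ (eval_mem t T hv b)
  | .impl a b => T.resid_mem _ (eval_mem t T hv a) _ (eval_mem t T hv b)

lemma mul_self_eq_of_P1 (t : ContTNorm) (T : TruthAlg t) (h : P1 (Taut t T))
    {a : ℝ} (ha : a ∈ T.carrier) : t.mul a a = a := by
  have haI := T.subset ha
  have hequiv : Formula.iff (.conj (.var 0) (.var 0)) (.var 0) ∈ Taut t T := by
    refine (h t T rfl _ _).mpr fun v hv => ?_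
    have hvI := T.subset (hv 0)
    exact ⟨fun h1 => (t.eq_one_of_mul_eq_one hvI hvI h1).1,
      fun h1 => (congrArg₂ t.mul h1 h1).trans (t.one_mul' 1 one_mem_I01)⟩
  have hval : t.mul (resid t (t.mul a a) a) (resid t a (t.mul a a)) = 1 := by
    simpa only [Formula.iff, eval] using hequiv (fun _ => a) fun _ => ha
  have haa : t.mul a a ∈ I01 := t.maps_to a haI a haI
  have hres := t.eq_one_of_mul_eq_one (resid_mem_I01 t haa haI) (resid_mem_I01 t haI haa) hval
  exact le_antisymm (t.mul_le_left haI haI) (le_of_resid_eq_one t haI haa hres.2)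

lemma eval_eq_eval_minT (t : ContTNorm) (T : TruthAlg t)
    (hidem : ∀ a ∈ T.carrier, t.mul a a = a) {v : ℕ → ℝ} (hv : IsValuation t T v) :
    ∀ φ : Formula, eval t v φ = eval minT v φ
  | .var _ | .bot => rfl
  | .conj a b => by
    have ha := eval_mem t T hv a
    show t.mul (eval t v a) (eval t v b) = min (eval minT v a) (eval minT v b)
    rw [t.mul_eq_min_of_mul_self_eq (T.subset ha) (hidem _ ha) (T.subset (eval_mem t T hv b)),
      eval_eq_eval_minT t T hidem hv a, eval_eq_eval_minT t T hidem hv b]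
  | .impl a b => by
    have ha := eval_mem t T hv a
    show resid t (eval t v a) (eval t v b) = resid minT (eval minT v a) (eval minT v b)
    rw [resid_eq_resid_minT
        (fun _ hc => t.mul_eq_min_of_mul_self_eq (T.subset ha) (hidem _ ha) hc),
      eval_eq_eval_minT t T hidem hv a, eval_eq_eval_minT t T hidem hv b]

/-- Any real-valued logic satisfying P1 extends Gödel logic. -/
theorem P1_implies_extends_Godel (t : ContTNorm) (T : TruthAlg t)
    (h : P1 (Taut t T)) : Taut minT (fullAlg minT) ⊆ Taut t T := by
  intro α hα v hv
  rw [eval_eq_eval_minT t T (fun _ ha => mul_self_eq_of_P1 t T h ha) hv α]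
  exact hα v fun i => T.subset (hv i)

end
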